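/- Let g > 0 and q = a·g with a > 0. The cubic P⁻(z) = g·z³ - (1+ag)·z² + a·z - 2N/a (with N > 0) has three distinct real roots if and only if 0 < N < a³·(-2q³ + 3q² + 3q - 2 + 2(q² - q + 1)^{3/2})/(54q²). -/
import Mathlib

private lemma aux_disc (a g N r₁ r₂ r₃ : ℝ)
    (hv1 : g * (r₁ + r₂ + r₃) = 1 + a * g)
    (hv2 : g * (r₁*r₂ + r₁*r₃ + r₂*r₃) = a)
    (hv3 : a * g * (r₁*r₂*r₃) = 2 * N) :
    27*(a*g)^2*N^2 - a^3*(-2*(a*g)^3 + 3*(a*g)^2 + 3*(a*g) - 2)*N - a^6*(1-a*g)^2/4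
      = -(a^4*g^4/4) * ((r₁-r₂)^2*(r₁-r₃)^2*(r₂-r₃)^2) := by
  linear_combination
    (-2*a^3*N - 2*a^3*g*N*r₃ - 2*a^3*g*N*r₂ - 2*a^3*g*N*r₁ - 2*a^3*g^2*N*r₃^2
      - 4*a^3*g^2*N*r₂*r₃ - 2*a^3*g^2*N*r₂^2 - 4*a^3*g^2*N*r₁*r₃ - 4*a^3*g^2*N*r₁*r₂
      - 2*a^3*g^2*N*r₁^2 + 5*a^4*g*N - 2*a^4*g^2*N*r₃ - 2*a^4*g^2*N*r₂ - 2*a^4*g^2*N*r₁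
      - 2*a^5*g^2*N + (1/4)*a^6 + (1/4)*a^6*g*r₃ + (1/4)*a^6*g*r₂ + (1/4)*a^6*g*r₁
      + (1/4)*a^7*g) * hv1 +
    (9*a^3*g^2*N*r₃ + 9*a^3*g^2*N*r₂ + 9*a^3*g^2*N*r₁ + (1/4)*a^4*g^3*r₂*r₃^3
      + (-1/2)*a^4*g^3*r₂^2*r₃^2 + (1/4)*a^4*g^3*r₂^3*r₃ + (1/4)*a^4*g^3*r₁*r₃^3
      + (-3/4)*a^4*g^3*r₁*r₂*r₃^2 + (-3/4)*a^4*g^3*r₁*r₂^2*r₃ + (1/4)*a^4*g^3*r₁*r₂^3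
      + (-1/2)*a^4*g^3*r₁^2*r₃^2 + (-3/4)*a^4*g^3*r₁^2*r₂*r₃ + (-1/2)*a^4*g^3*r₁^2*r₂^2
      + (1/4)*a^4*g^3*r₁^3*r₃ + (1/4)*a^4*g^3*r₁^3*r₂ + (1/4)*a^5*g^2*r₃^2
      + (-1/2)*a^5*g^2*r₂*r₃ + (1/4)*a^5*g^2*r₂^2 + (-1/2)*a^5*g^2*r₁*r₃
      + (-1/2)*a^5*g^2*r₁*r₂ + (1/4)*a^5*g^2*r₁^2 - 1*a^6*g) * hv2 +
    ((-27/2)*a^2*g^2*N - 1*a^3*g^3*r₃^3 + (3/2)*a^3*g^3*r₂*r₃^2 + (3/2)*a^3*g^3*r₂^2*r₃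
      - 1*a^3*g^3*r₂^3 + (3/2)*a^3*g^3*r₁*r₃^2 + (3/4)*a^3*g^3*r₁*r₂*r₃
      + (3/2)*a^3*g^3*r₁*r₂^2 + (3/2)*a^3*g^3*r₁^2*r₃ + (3/2)*a^3*g^3*r₁^2*r₂
      - 1*a^3*g^3*r₁^3) * hv3

private lemma aux_prod (a g N s : ℝ) (hs2 : s^2 = (a*g)^2 - a*g + 1) :
    a^2 * (a*((1+a*g)-s)^3 - 3*a*(1+a*g)*((1+a*g)-s)^2 + 9*a^2*g*((1+a*g)-s) - 54*N*g^2)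
        * (a*((1+a*g)+s)^3 - 3*a*(1+a*g)*((1+a*g)+s)^2 + 9*a^2*g*((1+a*g)+s) - 54*N*g^2)
      = 108*g^2*(27*(a*g)^2*N^2 - a^3*(-2*(a*g)^3 + 3*(a*g)^2 + 3*(a*g) - 2)*N
          - a^6*(1-a*g)^2/4) := by
  linear_combination (-4*a^4 + 5*a^4*s^2 - 1*a^4*s^4 + 8*a^5*g - 5*a^5*g*s^2 - 12*a^6*g^2
    + 5*a^6*g^2*s^2 + 8*a^7*g^3 - 4*a^8*g^4) * hs2

private lemma aux_quad (a g N s : ℝ) (hs2 : s^2 = (a*g)^2 - a*g + 1) :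
    (54*(a*g)^2*N - a^3*((-2*(a*g)^3 + 3*(a*g)^2 + 3*(a*g) - 2) + 2*s^3))
      * (54*(a*g)^2*N - a^3*((-2*(a*g)^3 + 3*(a*g)^2 + 3*(a*g) - 2) - 2*s^3))
      = 108*(a*g)^2*(27*(a*g)^2*N^2 - a^3*(-2*(a*g)^3 + 3*(a*g)^2 + 3*(a*g) - 2)*N
          - a^6*(1-a*g)^2/4) := by
  linear_combination (-4*a^6 - 4*a^6*s^2 - 4*a^6*s^4 + 8*a^7*g + 4*a^7*g*s^2 - 12*a^8*g^2
    - 4*a^8*g^2*s^2 + 8*a^9*g^3 - 4*a^10*g^4) * hs2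


private lemma aux_slt (x s : ℝ) (hx : 0 < x) (hs0 : 0 < s)
    (hs2 : s^2 = x^2 - x + 1) : s < 1 + x := by nlinarith

private lemma aux_Ble (x s : ℝ) (hx : 0 < x) (hs0 : 0 < s)
    (hs2 : s^2 = x^2 - x + 1) : -2*x^3 + 3*x^2 + 3*x - 2 ≤ 2*s^3 := by
  have h6 : s^6 = (x^2 - x + 1)^3 := by
    calc s^6 = (s^2)^3 := by ring
    _ = (x^2 - x + 1)^3 := by rw [hs2]
  nlinarith [h6, pow_pos hs0 3, sq_nonneg (x*(1 - x))]

private lemma aux_lt_of_mul_pos {c x y : ℝ} (h : 0 < c*(x - y)) (hc : 0 < c) : y < x := by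
  nlinarith

private lemma aux_one_le_sq {x : ℝ} (h : 1 ≤ x) : 1 ≤ x^2 := by nlinarith

private lemma aux_le_mul_sq {x c : ℝ} (hc : 0 < c) (hx : 1 ≤ x^2) : c ≤ x^2*c := by
  nlinarith

set_option maxHeartbeats 1000000 in
/-- The cubic `P⁻(z) = g z³ - (1+ag) z² + a z - 2N/a` (with `g, a, N > 0`, `q = ag`) has
three distinct real roots if and only if
`0 < N < a³(-2q³ + 3q² + 3q - 2 + 2(q² - q + 1)^{3/2})/(54 q²)`. -/
theorem cubic_three_roots_iff_discriminant (g a N : ℝ) (hg : 0 < g) (ha : 0 < a)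
    (hN : 0 < N) :
    (∃ r₁ r₂ r₃ : ℝ, r₁ ≠ r₂ ∧ r₁ ≠ r₃ ∧ r₂ ≠ r₃ ∧
      g * r₁ ^ 3 - (1 + a * g) * r₁ ^ 2 + a * r₁ - 2 * N / a = 0 ∧
      g * r₂ ^ 3 - (1 + a * g) * r₂ ^ 2 + a * r₂ - 2 * N / a = 0 ∧
      g * r₃ ^ 3 - (1 + a * g) * r₃ ^ 2 + a * r₃ - 2 * N / a = 0) ↔
    (0 < N ∧ N < a ^ 3 *
      (-2 * (a * g) ^ 3 + 3 * (a * g) ^ 2 + 3 * (a * g) - 2 +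
        2 * ((a * g) ^ 2 - a * g + 1) ^ ((3 : ℝ) / 2)) / (54 * (a * g) ^ 2)) := by
  have ha' : a ≠ 0 := ne_of_gt ha
  have hg' : g ≠ 0 := ne_of_gt hg
  have hag : 0 < a * g := mul_pos ha hg
  have he : 0 < (a*g)^2 - a*g + 1 := by nlinarith [sq_nonneg (a*g - 1)]
  obtain ⟨s, hs0, hs2⟩ : ∃ s : ℝ, 0 < s ∧ s^2 = (a*g)^2 - a*g + 1 :=
    ⟨Real.sqrt ((a*g)^2 - a*g + 1), Real.sqrt_pos.mpr he, Real.sq_sqrt he.le⟩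
  have hS : ((a*g)^2 - a*g + 1 : ℝ) ^ ((3 : ℝ)/2) = s^3 := by
    rw [← hs2, ← Real.rpow_natCast s 2, ← Real.rpow_mul hs0.le, ← Real.rpow_natCast s 3]
    norm_num
  rw [hS]
  have hs3 : 0 < s^3 := by positivity
  have h6 : s^6 = ((a*g)^2 - a*g + 1)^3 := by
    calc s^6 = (s^2)^3 := by ring
    _ = ((a*g)^2 - a*g + 1)^3 := by rw [hs2]
  have hBle : -2*(a*g)^3 + 3*(a*g)^2 + 3*(a*g) - 2 ≤ 2*s^3 := aux_Ble (a*g) s hag hs0 hs2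
  have hq2 : (0:ℝ) < 54*(a*g)^2 := by positivity
  have hpos2 : 0 < 54*(a*g)^2*N - a^3*((-2*(a*g)^3 + 3*(a*g)^2 + 3*(a*g) - 2) - 2*s^3) := by
    have h1 : a^3*((-2*(a*g)^3 + 3*(a*g)^2 + 3*(a*g) - 2) - 2*s^3) ≤ 0 :=
      mul_nonpos_of_nonneg_of_nonpos (by positivity) (by linarith)
    linarith [mul_pos hq2 hN]
  have hquad := aux_quad a g N s hs2
  have hiff : (27*(a*g)^2*N^2 - a^3*(-2*(a*g)^3 + 3*(a*g)^2 + 3*(a*g) - 2)*N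
        - a^6*(1-a*g)^2/4 < 0) ↔
      N < a ^ 3 * (-2 * (a * g) ^ 3 + 3 * (a * g) ^ 2 + 3 * (a * g) - 2 + 2 * s ^ 3) /
        (54 * (a * g) ^ 2) := by
    rw [lt_div_iff₀ hq2]
    constructor
    · intro h
      have hfirst : 54*(a*g)^2*N
          - a^3*((-2*(a*g)^3 + 3*(a*g)^2 + 3*(a*g) - 2) + 2*s^3) < 0 := by
        by_contra h'
        push_neg at h'
        linarith [mul_nonneg h' hpos2.le, hquad,
          mul_pos (by positivity : (0:ℝ) < 108*(a*g)^2) (neg_pos.mpr h)]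
      linarith
    · intro h
      have hfirst : 54*(a*g)^2*N
          - a^3*((-2*(a*g)^3 + 3*(a*g)^2 + 3*(a*g) - 2) + 2*s^3) < 0 := by linarith
      have hneg := mul_neg_of_neg_of_pos hfirst hpos2
      rw [hquad] at hneg
      by_contra h0
      push_neg at h0
      linarith [mul_nonneg (by positivity : (0:ℝ) ≤ 108*(a*g)^2) h0]
  constructor
  · rintro ⟨r₁, r₂, r₃, h12, h13, h23, e₁, e₂, e₃⟩
    refine ⟨hN, ?_⟩
    have h2Na : a * (2*N/a) = 2*N := by field_simp
    have f12 : (r₁ - r₂) * (g*(r₁^2 + r₁*r₂ + r₂^2) - (1+a*g)*(r₁+r₂) + a) = 0 := by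
      linear_combination e₁ - e₂
    have f13 : (r₁ - r₃) * (g*(r₁^2 + r₁*r₃ + r₃^2) - (1+a*g)*(r₁+r₃) + a) = 0 := by
      linear_combination e₁ - e₃
    have g12 : g*(r₁^2 + r₁*r₂ + r₂^2) - (1+a*g)*(r₁+r₂) + a = 0 :=
      (mul_eq_zero.mp f12).resolve_left (sub_ne_zero.mpr h12)
    have g13 : g*(r₁^2 + r₁*r₃ + r₃^2) - (1+a*g)*(r₁+r₃) + a = 0 :=
      (mul_eq_zero.mp f13).resolve_left (sub_ne_zero.mpr h13)
    have f4 : (r₂ - r₃) * (g*(r₁+r₂+r₃) - (1+a*g)) = 0 := by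
      linear_combination g12 - g13
    have hv1 : g * (r₁ + r₂ + r₃) = 1 + a * g := by
      have := (mul_eq_zero.mp f4).resolve_left (sub_ne_zero.mpr h23)
      linarith
    have hv2 : g * (r₁*r₂ + r₁*r₃ + r₂*r₃) = a := by
      linear_combination (r₁+r₂)*hv1 - g12
    have hv3 : a * g * (r₁*r₂*r₃) = 2 * N := by
      linear_combination a*e₁ + h2Na - a*r₁^2*hv1 + a*r₁*hv2
    have hkey := aux_disc a g N r₁ r₂ r₃ hv1 hv2 hv3
    have p12 : 0 < (r₁ - r₂)^2 := sq_pos_of_ne_zero (sub_ne_zero.mpr h12)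
    have p13 : 0 < (r₁ - r₃)^2 := sq_pos_of_ne_zero (sub_ne_zero.mpr h13)
    have p23 : 0 < (r₂ - r₃)^2 := sq_pos_of_ne_zero (sub_ne_zero.mpr h23)
    have hpp : 0 < a^4*g^4/4 * ((r₁-r₂)^2*(r₁-r₃)^2*(r₂-r₃)^2) :=
      mul_pos (by positivity) (mul_pos (mul_pos p12 p13) p23)
    refine hiff.mp ?_
    rw [hkey]
    linarith
  · rintro ⟨-, hlt⟩
    have hFneg : 27*(a*g)^2*N^2 - a^3*(-2*(a*g)^3 + 3*(a*g)^2 + 3*(a*g) - 2)*N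
        - a^6*(1-a*g)^2/4 < 0 := hiff.mpr hlt
    obtain ⟨P, hP⟩ : ∃ P : ℝ → ℝ,
        P = fun z => g * z ^ 3 - (1 + a * g) * z ^ 2 + a * z - 2 * N / a := ⟨_, rfl⟩
    have hPc : Continuous P := by
      rw [hP]
      exact ((((continuous_const.mul (continuous_pow 3)).sub
        (continuous_const.mul (continuous_pow 2))).add
        (continuous_const.mul continuous_id)).sub continuous_const)
    have h3g : (0:ℝ) < 3*g := by linarith
    obtain ⟨m, hm⟩ : ∃ m : ℝ, m = ((1 + a*g) - s)/(3*g) := ⟨_, rfl⟩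
    obtain ⟨M, hM⟩ : ∃ M : ℝ, M = ((1 + a*g) + s)/(3*g) := ⟨_, rfl⟩
    have hslt : s < 1 + a*g := aux_slt (a*g) s hag hs0 hs2
    have hm0 : 0 < m := by
      rw [hm]; exact div_pos (by linarith) h3g
    have hmM : m < M := by
      have hdMm : M - m = (2*s)/(3*g) := by rw [hm, hM]; ring
      have : 0 < M - m := by rw [hdMm]; positivity
      linarith
    have hgm : 3*g*m = (1 + a*g) - s := by rw [hm]; field_simp
    have hgM : 3*g*M = (1 + a*g) + s := by rw [hM]; field_simp
    have e1 : 27*g^2*a*(P m)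
        = a*((1+a*g)-s)^3 - 3*a*(1+a*g)*((1+a*g)-s)^2 + 9*a^2*g*((1+a*g)-s) - 54*N*g^2 := by
      rw [← hgm]
      simp only [hP]
      field_simp
      ring
    have e2 : 27*g^2*a*(P M)
        = a*((1+a*g)+s)^3 - 3*a*(1+a*g)*((1+a*g)+s)^2 + 9*a^2*g*((1+a*g)+s) - 54*N*g^2 := by
      rw [← hgM]
      simp only [hP]
      field_simp
      ring
    have hPmPM : 729*g^4*a^4*(P m * P M)
        = 108*g^2*(27*(a*g)^2*N^2 - a^3*(-2*(a*g)^3 + 3*(a*g)^2 + 3*(a*g) - 2)*N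
            - a^6*(1-a*g)^2/4) := by
      have hap := aux_prod a g N s hs2
      calc 729*g^4*a^4*(P m * P M)
          = a^2 * (27*g^2*a*(P m)) * (27*g^2*a*(P M)) := by ring
        _ = a^2 * (a*((1+a*g)-s)^3 - 3*a*(1+a*g)*((1+a*g)-s)^2 + 9*a^2*g*((1+a*g)-s)
              - 54*N*g^2) * (a*((1+a*g)+s)^3 - 3*a*(1+a*g)*((1+a*g)+s)^2
              + 9*a^2*g*((1+a*g)+s) - 54*N*g^2) := by rw [e1, e2]
        _ = _ := hap
    have hprodneg : P m * P M < 0 := by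
      by_contra h0
      push_neg at h0
      linarith [mul_nonneg (by positivity : (0:ℝ) ≤ 729*g^4*a^4) h0, hPmPM,
        mul_pos (by positivity : (0:ℝ) < 108*g^2) (neg_pos.mpr hFneg)]
    have hd0 : (a*((1+a*g)-s)^3 - 3*a*(1+a*g)*((1+a*g)-s)^2 + 9*a^2*g*((1+a*g)-s) - 54*N*g^2)
        - (a*((1+a*g)+s)^3 - 3*a*(1+a*g)*((1+a*g)+s)^2 + 9*a^2*g*((1+a*g)+s) - 54*N*g^2)
        = 4*a*s*((a*g)^2 - a*g + 1) := by
      linear_combination (-2*a*s)*hs2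
    have hdiff : 27*g^2*a*(P m - P M) = 4*a*s*((a*g)^2 - a*g + 1) := by
      linear_combination e1 - e2 + hd0
    have hdpos : 0 < 27*g^2*a*(P m - P M) := by
      rw [hdiff]; positivity
    have h27 : (0:ℝ) < 27*g^2*a := by positivity
    have hPMlt : P M < P m := aux_lt_of_mul_pos (by linarith [hdpos]) h27
    have hPm : 0 < P m := by
      by_contra h
      push_neg at h
      linarith [mul_nonneg (neg_nonneg.mpr h)
        (neg_nonneg.mpr (le_of_lt (lt_of_lt_of_le hPMlt h))), hprodneg]
    have hPM : P M < 0 := by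
      by_contra h
      push_neg at h
      linarith [mul_nonneg (le_trans h hPMlt.le) h, hprodneg]
    have hP0 : P 0 < 0 := by
      have h0 : P 0 = -(2*N/a) := by simp only [hP]; ring
      have hp : 0 < 2*N/a := by positivity
      rw [h0]; linarith
    obtain ⟨r₁, hr₁m, hr₁⟩ := intermediate_value_Ioo hm0.le hPc.continuousOn
      (Set.mem_Ioo.mpr ⟨hP0, hPm⟩ : (0:ℝ) ∈ Set.Ioo (P 0) (P m))
    obtain ⟨r₂, hr₂m, hr₂⟩ := intermediate_value_Ioo' hmM.le hPc.continuousOn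
      (Set.mem_Ioo.mpr ⟨hPM, hPm⟩ : (0:ℝ) ∈ Set.Ioo (P M) (P m))
    obtain ⟨R, hR⟩ : ∃ R : ℝ, R = M + 1 + (1 + a*g + 2*N/a)/g := ⟨_, rfl⟩
    have hxpos : 0 < (1 + a*g + 2*N/a)/g := by positivity
    have hMR : M < R := by rw [hR]; linarith
    have hM0 : 0 < M := hm0.trans hmM
    have hR1 : (1:ℝ) ≤ R := by rw [hR]; linarith
    have hgR2 : g*R = g*M + g + (1 + a*g + 2*N/a) := by
      rw [hR]; field_simp
    have hkeyR : 2*N/a ≤ g*R - (1 + a*g) := by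
      linarith [hgR2, mul_pos hg hM0]
    have hPR : 0 < P R := by
      have hQ : P R = R^2*(g*R - (1 + a*g)) + a*R - 2*N/a := by simp only [hP]; ring
      have hR2 : (1:ℝ) ≤ R^2 := aux_one_le_sq hR1
      have t1 : R^2*(2*N/a) ≤ R^2*(g*R - (1 + a*g)) :=
        mul_le_mul_of_nonneg_left hkeyR (sq_nonneg R)
      have t2 : 2*N/a ≤ R^2*(2*N/a) := aux_le_mul_sq (by positivity) hR2
      have t3 : 0 < a*R := mul_pos ha (by linarith)
      rw [hQ]; linarith
    obtain ⟨r₃, hr₃m, hr₃⟩ := intermediate_value_Ioo hMR.le hPc.continuousOn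
      (Set.mem_Ioo.mpr ⟨hPM, hPR⟩ : (0:ℝ) ∈ Set.Ioo (P M) (P R))
    refine ⟨r₁, r₂, r₃, ?_, ?_, ?_, ?_, ?_, ?_⟩
    · exact ne_of_lt (hr₁m.2.trans hr₂m.1)
    · exact ne_of_lt ((hr₁m.2.trans hr₂m.1).trans (hr₂m.2.trans hr₃m.1))
    · exact ne_of_lt (hr₂m.2.trans hr₃m.1)
    · simpa only [hP] using hr₁
    · simpa only [hP] using hr₂
    · simpa only [hP] using hr₃
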